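/- For every k with 1 ≤ k ≤ e−1, the element λ^k of G(e,e,n) is balanced: for all w ∈ G(e,e,n), w left-divides λ^k (ℓ(w) + ℓ(w^{−1}λ^k) = ℓ(λ^k)) if and only if w right-divides λ^k (ℓ(λ^k w^{−1}) + ℓ(w) = ℓ(λ^k)). -/

import Mathlib

noncomputable section

open Matrix

/-- The primitive `e`-th root of unity `ζ_e = exp(2πi/e)`. -/
def zeta (e : ℕ) : ℂ := Complex.exp (2 * (Real.pi : ℂ) * Complex.I / (e : ℂ))

/-- The generator `t_i` of `G(e,e,n)`: it swaps the first two coordinates with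
multipliers `ζ_e^{-i}` and `ζ_e^{i}` and is the identity elsewhere. -/
def tmat (e n i : ℕ) : Matrix (Fin n) (Fin n) ℂ :=
  Matrix.of fun p q =>
    if (p : ℕ) = 0 ∧ (q : ℕ) = 1 then (zeta e)⁻¹ ^ i
    else if (p : ℕ) = 1 ∧ (q : ℕ) = 0 then zeta e ^ i
    else if (p : ℕ) = (q : ℕ) ∧ 2 ≤ (p : ℕ) then 1 else 0

/-- The generator `s_j` of `G(e,e,n)` (`3 ≤ j ≤ n`, 1-based): the permutation
matrix of the transposition `(j-1, j)`. -/
def smat (n j : ℕ) : Matrix (Fin n) (Fin n) ℂ :=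
  Matrix.of fun p q =>
    if (p : ℕ) = j - 2 ∧ (q : ℕ) = j - 1 then 1
    else if (p : ℕ) = j - 1 ∧ (q : ℕ) = j - 2 then 1
    else if (p : ℕ) = (q : ℕ) ∧ (p : ℕ) ≠ j - 2 ∧ (p : ℕ) ≠ j - 1 then 1 else 0

/-- The Corran–Picantin generating set `X = {t_0,…,t_{e-1}, s_3,…,s_n}`. -/
def genSet (e n : ℕ) : Set (Matrix (Fin n) (Fin n) ℂ) :=
  {M | (∃ i < e, M = tmat e n i) ∨ ∃ j, 3 ≤ j ∧ j ≤ n ∧ M = smat n j}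

/-- Membership in `G(e,e,n)`: a monomial matrix whose nonzero entries are
`e`-th roots of unity with product of nonzero entries equal to `1`.
(Each row sum is the unique nonzero entry of that row.) -/
def IsGeen (e n : ℕ) (w : Matrix (Fin n) (Fin n) ℂ) : Prop :=
  (∀ i, ∃! j, w i j ≠ 0) ∧ (∀ j, ∃! i, w i j ≠ 0) ∧
  (∀ i j, w i j ≠ 0 → w i j ^ e = 1) ∧ (∏ i, ∑ j, w i j) = 1

/-- Word length over the Corran–Picantin generating set. -/
def len (e n : ℕ) (w : Matrix (Fin n) (Fin n) ℂ) : ℕ :=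
  sInf {l | ∃ L : List (Matrix (Fin n) (Fin n) ℂ),
    (∀ x ∈ L, x ∈ genSet e n) ∧ L.prod = w ∧ L.length = l}

/-- The element `λ`: diagonal with `λ[i,i] = ζ_e` for `i ≥ 2` (1-based) and
`λ[1,1] = ζ_e^{-(n-1)}`. -/
def lamMat (e n : ℕ) : Matrix (Fin n) (Fin n) ℂ :=
  Matrix.of fun p q =>
    if p = q then (if (p : ℕ) = 0 then (zeta e)⁻¹ ^ (n - 1) else zeta e) else 0

/-- Left divisibility: `u ⪯ w` iff `w = u v` with `ℓ(u) + ℓ(v) = ℓ(w)`. -/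
def LDiv (e n : ℕ) (u w : Matrix (Fin n) (Fin n) ℂ) : Prop :=
  ∃ v, IsGeen e n v ∧ u * v = w ∧ len e n u + len e n v = len e n w

/-- Right divisibility: `u ⪯_r w` iff `w = v u` with `ℓ(v) + ℓ(u) = ℓ(w)`. -/
def RDiv (e n : ℕ) (u w : Matrix (Fin n) (Fin n) ℂ) : Prop :=
  ∃ v, IsGeen e n v ∧ v * u = w ∧ len e n v + len e n u = len e n w

lemma zeta_ne_zero (e : ℕ) : zeta e ≠ 0 := Complex.exp_ne_zero _

lemma zeta_pow_e {e : ℕ} (he : 0 < e) : zeta e ^ e = 1 := by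
  rw [zeta, ← Complex.exp_nat_mul]
  have h : (e : ℂ) ≠ 0 := Nat.cast_ne_zero.mpr he.ne'
  rw [show (e : ℂ) * (2 * (Real.pi : ℂ) * Complex.I / (e : ℂ)) = 2 * (Real.pi : ℂ) * Complex.I by
    field_simp]
  exact Complex.exp_two_pi_mul_I

def dvec (e n : ℕ) : Fin n → ℂ := fun p => if (p : ℕ) = 0 then (zeta e)⁻¹ ^ (n - 1) else zeta e

lemma dvec_ne_zero (e n : ℕ) (p : Fin n) : dvec e n p ≠ 0 := by
  unfold dvec; split
  · exact pow_ne_zero _ (inv_ne_zero (zeta_ne_zero e))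
  · exact zeta_ne_zero e

lemma dvec_pow_e {e : ℕ} (n : ℕ) (he : 0 < e) (p : Fin n) : dvec e n p ^ e = 1 := by
  unfold dvec; split
  · rw [← pow_mul, mul_comm, pow_mul, inv_pow, zeta_pow_e he, inv_one, one_pow]
  · exact zeta_pow_e he

lemma lamMat_eq (e n : ℕ) : lamMat e n = Matrix.diagonal (dvec e n) := by
  ext p q
  rw [Matrix.diagonal_apply]
  rfl

def lamInv (e n : ℕ) : Matrix (Fin n) (Fin n) ℂ :=
  Matrix.diagonal (fun p => (dvec e n p)⁻¹)

lemma lam_mul_inv (e n : ℕ) : lamMat e n * lamInv e n = 1 := by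
  rw [lamMat_eq, lamInv, Matrix.diagonal_mul_diagonal, ← Matrix.diagonal_one]
  rw [show (fun i => dvec e n i * (dvec e n i)⁻¹) = fun _ => (1:ℂ) from
    funext fun p => mul_inv_cancel₀ (dvec_ne_zero e n p)]

lemma inv_mul_lam (e n : ℕ) : lamInv e n * lamMat e n = 1 := by
  rw [lamMat_eq, lamInv, Matrix.diagonal_mul_diagonal, ← Matrix.diagonal_one]
  rw [show (fun i => (dvec e n i)⁻¹ * dvec e n i) = fun _ => (1:ℂ) from
    funext fun p => inv_mul_cancel₀ (dvec_ne_zero e n p)]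

lemma conj_t {e n : ℕ} (he : 0 < e) (hn : 2 ≤ n) (i : ℕ) :
    lamMat e n * tmat e n i * lamInv e n = tmat e n ((i + n) % e) := by
  have hz : zeta e ≠ 0 := zeta_ne_zero e
  have hze : zeta e ^ e = 1 := zeta_pow_e he
  have hzi : (zeta e)⁻¹ ^ e = 1 := by rw [inv_pow, hze, inv_one]
  ext p q
  rw [lamMat_eq, lamInv, Matrix.mul_diagonal, Matrix.diagonal_mul]
  show dvec e n p * tmat e n i p q * (dvec e n q)⁻¹ = tmat e n ((i + n) % e) p q
  simp only [tmat, Matrix.of_apply]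
  split_ifs with h1 h2 h3
  · -- p = 0, q = 1
    have hdp : dvec e n p = (zeta e)⁻¹ ^ (n - 1) := by simp [dvec, h1.1]
    have hdq : dvec e n q = zeta e := by simp [dvec, h1.2]
    rw [hdp, hdq]
    have step1 : (zeta e)⁻¹ ^ (n-1) * (zeta e)⁻¹ ^ i * (zeta e)⁻¹ = (zeta e)⁻¹ ^ (i + n) := by
      rw [show i + n = (n-1) + i + 1 by omega, pow_add, pow_add, pow_one]
    rw [step1, ← pow_eq_pow_mod _ hzi]
  · -- p = 1, q = 0
    have hdp : dvec e n p = zeta e := by simp [dvec, h2.1]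
    have hdq : dvec e n q = (zeta e)⁻¹ ^ (n - 1) := by simp [dvec, h2.2]
    rw [hdp, hdq, inv_pow, inv_inv]
    have step1 : zeta e * zeta e ^ i * zeta e ^ (n-1) = zeta e ^ (i + n) := by
      rw [show i + n = 1 + i + (n-1) by omega, pow_add, pow_add, pow_one]
    rw [step1, ← pow_eq_pow_mod _ hze]
  · -- p = q, 2 ≤ p
    have hp0 : (p : ℕ) ≠ 0 := by omega
    have hq0 : (q : ℕ) ≠ 0 := by omega
    have hdp : dvec e n p = zeta e := by simp [dvec, hp0]
    have hdq : dvec e n q = zeta e := by simp [dvec, hq0]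
    rw [hdp, hdq, mul_one, mul_inv_cancel₀ hz]
  · rw [mul_zero, zero_mul]

lemma conj_s {e n : ℕ} (j : ℕ) (hj3 : 3 ≤ j) (hjn : j ≤ n) :
    lamMat e n * smat n j * lamInv e n = smat n j := by
  have hz : zeta e ≠ 0 := zeta_ne_zero e
  ext p q
  rw [lamMat_eq, lamInv, Matrix.mul_diagonal, Matrix.diagonal_mul]
  show dvec e n p * smat n j p q * (dvec e n q)⁻¹ = smat n j p q
  simp only [smat, Matrix.of_apply]
  split_ifs with h1 h2 h3
  · have hdp : dvec e n p = zeta e := by simp [dvec]; intro h; omega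
    have hdq : dvec e n q = zeta e := by simp [dvec]; intro h; omega
    rw [hdp, hdq, mul_one, mul_inv_cancel₀ hz]
  · have hdp : dvec e n p = zeta e := by simp [dvec]; intro h; omega
    have hdq : dvec e n q = zeta e := by simp [dvec]; intro h; omega
    rw [hdp, hdq, mul_one, mul_inv_cancel₀ hz]
  · have hpq : p = q := Fin.ext h3.1
    subst hpq
    rw [mul_one, mul_inv_cancel₀ (dvec_ne_zero e n p)]
  · rw [mul_zero, zero_mul]

lemma sandwich {n : ℕ} (A B x : Matrix (Fin n) (Fin n) ℂ) (hAB : A * B = 1) :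
    A * (B * x * A) * B = x := by
  have : A * (B * x * A) * B = (A * B) * x * (A * B) := by
    simp only [Matrix.mul_assoc]
  rw [this, hAB, Matrix.one_mul, Matrix.mul_one]

lemma prod_conj {n : ℕ} (A B : Matrix (Fin n) (Fin n) ℂ)
    (hAB : A * B = 1) (hBA : B * A = 1) (L : List (Matrix (Fin n) (Fin n) ℂ)) :
    (L.map (fun x => A * x * B)).prod = A * L.prod * B := by
  induction L with
  | nil => simp [hAB]
  | cons a l ih =>
      rw [List.map_cons, List.prod_cons, ih, List.prod_cons]
      have h1 : A * a * B * (A * l.prod * B) = A * a * (B * A) * l.prod * B := by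
        simp only [Matrix.mul_assoc]
      rw [h1, hBA, Matrix.mul_one]
      simp only [Matrix.mul_assoc]

lemma f_mem {e n : ℕ} (he : 0 < e) (hn : 2 ≤ n) {x : Matrix (Fin n) (Fin n) ℂ}
    (hx : x ∈ genSet e n) : lamMat e n * x * lamInv e n ∈ genSet e n := by
  rcases hx with ⟨i, hi, rfl⟩ | ⟨j, h3, hjn, rfl⟩
  · exact Or.inl ⟨(i + n) % e, Nat.mod_lt _ he, (conj_t he hn i).symm ▸ rfl⟩
  · exact Or.inr ⟨j, h3, hjn, (conj_s j h3 hjn).symm ▸ rfl⟩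

lemma g_mem {e n : ℕ} (he : 0 < e) (hn : 2 ≤ n) {x : Matrix (Fin n) (Fin n) ℂ}
    (hx : x ∈ genSet e n) : lamInv e n * x * lamMat e n ∈ genSet e n := by
  rcases hx with ⟨i, hi, rfl⟩ | ⟨j, h3, hjn, rfl⟩
  · set m := (i + (e - n % e)) % e with hm
    have hmlt : m < e := Nat.mod_lt _ he
    have hrlt : n % e < e := Nat.mod_lt _ he
    have harith : (m + n) % e = i := by
      have hd : e * (n / e) + n % e = n := Nat.div_add_mod n e
      have h1 : (m + n) % e = (i + (e - n % e) + n) % e := by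
        rw [hm, Nat.mod_add_mod]
      have h2 : i + (e - n % e) + n = i + e * (n / e + 1) := by
        have h3 : e - n % e + n % e = e := Nat.sub_add_cancel hrlt.le
        calc i + (e - n % e) + n = i + (e - n % e) + (e * (n / e) + n % e) := by rw [hd]
          _ = i + (e - n % e + n % e) + e * (n / e) := by ring
          _ = i + e + e * (n / e) := by rw [h3]
          _ = i + e * (n / e + 1) := by ring
      rw [h1, h2, Nat.add_mul_mod_self_left, Nat.mod_eq_of_lt hi]
    have hc : lamMat e n * tmat e n m * lamInv e n = tmat e n i := by
      rw [conj_t he hn m, harith]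
    have : lamInv e n * tmat e n i * lamMat e n = tmat e n m := by
      rw [← hc]; exact sandwich _ _ _ (inv_mul_lam e n)
    exact Or.inl ⟨m, hmlt, this⟩
  · have hc : lamMat e n * smat n j * lamInv e n = smat n j := conj_s j h3 hjn
    have : lamInv e n * smat n j * lamMat e n = smat n j := by
      conv_lhs => rw [← hc]
      exact sandwich _ _ _ (inv_mul_lam e n)
    exact Or.inr ⟨j, h3, hjn, this⟩

lemma len_conj_gen {e n : ℕ} (A B : Matrix (Fin n) (Fin n) ℂ)
    (hAB : A * B = 1) (hBA : B * A = 1)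
    (hA : ∀ y ∈ genSet e n, A * y * B ∈ genSet e n)
    (hB : ∀ y ∈ genSet e n, B * y * A ∈ genSet e n)
    (x : Matrix (Fin n) (Fin n) ℂ) :
    len e n (A * x * B) = len e n x := by
  unfold len; congr 1; ext l
  simp only [Set.mem_setOf_eq]
  constructor
  · rintro ⟨L, h1, h2, h3⟩
    refine ⟨L.map (fun y => B * y * A), ?_, ?_, by simp [h3]⟩
    · intro y hy
      obtain ⟨z, hz, rfl⟩ := List.mem_map.mp hy
      exact hB z (h1 z hz)
    · rw [prod_conj B A hBA hAB, h2, sandwich B A x hBA]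
  · rintro ⟨L, h1, h2, h3⟩
    refine ⟨L.map (fun y => A * y * B), ?_, ?_, by simp [h3]⟩
    · intro y hy
      obtain ⟨z, hz, rfl⟩ := List.mem_map.mp hy
      exact hA z (h1 z hz)
    · rw [prod_conj A B hAB hBA, h2]

lemma f_mem_pow {e n : ℕ} (he : 0 < e) (hn : 2 ≤ n) (k : ℕ) :
    ∀ y ∈ genSet e n, lamMat e n ^ k * y * lamInv e n ^ k ∈ genSet e n := by
  induction k with
  | zero => intro y hy; simpa using hy
  | succ k ih =>
      intro y hy
      have : lamMat e n ^ (k+1) * y * lamInv e n ^ (k+1)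
          = lamMat e n * (lamMat e n ^ k * y * lamInv e n ^ k) * lamInv e n := by
        rw [pow_succ' (lamMat e n), pow_succ (lamInv e n)]
        simp only [Matrix.mul_assoc]
      rw [this]
      exact f_mem he hn (ih y hy)

lemma g_mem_pow {e n : ℕ} (he : 0 < e) (hn : 2 ≤ n) (k : ℕ) :
    ∀ y ∈ genSet e n, lamInv e n ^ k * y * lamMat e n ^ k ∈ genSet e n := by
  induction k with
  | zero => intro y hy; simpa using hy
  | succ k ih =>
      intro y hy
      have : lamInv e n ^ (k+1) * y * lamMat e n ^ (k+1)
          = lamInv e n * (lamInv e n ^ k * y * lamMat e n ^ k) * lamMat e n := by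
        rw [pow_succ' (lamInv e n), pow_succ (lamMat e n)]
        simp only [Matrix.mul_assoc]
      rw [this]
      exact g_mem he hn (ih y hy)

lemma lam_pow_mul_inv_pow (e n k : ℕ) : lamMat e n ^ k * lamInv e n ^ k = 1 := by
  have hcomm : Commute (lamMat e n) (lamInv e n) := by
    unfold Commute SemiconjBy
    rw [lam_mul_inv, inv_mul_lam]
  rw [← hcomm.mul_pow, lam_mul_inv, one_pow]

lemma inv_pow_mul_lam_pow (e n k : ℕ) : lamInv e n ^ k * lamMat e n ^ k = 1 := by
  have hcomm : Commute (lamInv e n) (lamMat e n) := by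
    unfold Commute SemiconjBy
    rw [lam_mul_inv, inv_mul_lam]
  rw [← hcomm.mul_pow, inv_mul_lam, one_pow]

lemma len_conj_pow {e n : ℕ} (he : 0 < e) (hn : 2 ≤ n) (k : ℕ)
    (x : Matrix (Fin n) (Fin n) ℂ) :
    len e n (lamMat e n ^ k * x * lamInv e n ^ k) = len e n x :=
  len_conj_gen _ _ (lam_pow_mul_inv_pow e n k) (inv_pow_mul_lam_pow e n k)
    (f_mem_pow he hn k) (g_mem_pow he hn k) x

lemma len_conj_pow' {e n : ℕ} (he : 0 < e) (hn : 2 ≤ n) (k : ℕ)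
    (x : Matrix (Fin n) (Fin n) ℂ) :
    len e n (lamInv e n ^ k * x * lamMat e n ^ k) = len e n x :=
  len_conj_gen _ _ (inv_pow_mul_lam_pow e n k) (lam_pow_mul_inv_pow e n k)
    (g_mem_pow he hn k) (f_mem_pow he hn k) x

lemma geen_diag_conj {e n : ℕ} (he : 0 < e) (d : Fin n → ℂ)
    (hd0 : ∀ i, d i ≠ 0) (hde : ∀ i, d i ^ e = 1)
    {v : Matrix (Fin n) (Fin n) ℂ} (hv : IsGeen e n v) :
    IsGeen e n (Matrix.diagonal d * v * Matrix.diagonal (fun i => (d i)⁻¹)) := by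
  obtain ⟨hv1, hv2, hv3, hv4⟩ := hv
  set M := Matrix.diagonal d * v * Matrix.diagonal (fun i => (d i)⁻¹) with hM
  have entry : ∀ p q, M p q = d p * v p q * (d q)⁻¹ := by
    intro p q
    rw [hM, Matrix.mul_diagonal, Matrix.diagonal_mul]
  have hne : ∀ p q, M p q ≠ 0 ↔ v p q ≠ 0 := by
    intro p q
    rw [entry]
    constructor
    · intro h hc; exact h (by rw [hc, mul_zero, zero_mul])
    · intro h; exact mul_ne_zero (mul_ne_zero (hd0 p) h) (inv_ne_zero (hd0 q))
  refine ⟨?_, ?_, ?_, ?_⟩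
  · intro i
    obtain ⟨j, hj, hu⟩ := hv1 i
    exact ⟨j, (hne i j).mpr hj, fun y hy => hu y ((hne i y).mp hy)⟩
  · intro j
    obtain ⟨i, hi, hu⟩ := hv2 j
    exact ⟨i, (hne i j).mpr hi, fun y hy => hu y ((hne y j).mp hy)⟩
  · intro i j h
    have hvij : v i j ≠ 0 := (hne i j).mp h
    rw [entry, mul_pow, mul_pow, hde i, one_mul, hv3 i j hvij, one_mul, inv_pow, hde j, inv_one]
  · choose σ hσ hσu using hv1
    have hrow : ∀ (i : Fin n) (c : Fin n → ℂ), (∑ j, v i j * c j) = v i (σ i) * c (σ i) := by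
      intro i c
      apply Finset.sum_eq_single
      · intro b _ hb
        have hb0 : v i b = 0 := by
          by_contra hc; exact hb (hσu i b hc)
        rw [hb0, zero_mul]
      · intro h; exact absurd (Finset.mem_univ _) h
    have hrow1 : ∀ i : Fin n, (∑ j, v i j) = v i (σ i) := by
      intro i
      have := hrow i (fun _ => 1)
      simpa using this
    have hσinj : Function.Injective σ := by
      intro a b hab
      obtain ⟨i2, _, hu2⟩ := hv2 (σ a)
      have ha : a = i2 := hu2 a (hσ a)
      have hb : b = i2 := hu2 b (by rw [hab]; exact hσ b)
      rw [ha, hb]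
    have hσbij : Function.Bijective σ := Finite.injective_iff_bijective.mp hσinj
    have hMrow : ∀ i : Fin n, (∑ j, M i j) = d i * (v i (σ i) * (d (σ i))⁻¹) := by
      intro i
      calc (∑ j, M i j) = ∑ j, d i * (v i j * (d j)⁻¹) := by
            apply Finset.sum_congr rfl
            intro j _
            rw [entry, mul_assoc]
        _ = d i * ∑ j, v i j * (d j)⁻¹ := by rw [Finset.mul_sum]
        _ = d i * (v i (σ i) * (d (σ i))⁻¹) := by rw [hrow i (fun j => (d j)⁻¹)]
    calc (∏ i, ∑ j, M i j) = ∏ i, d i * (v i (σ i) * (d (σ i))⁻¹) := by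
          exact Finset.prod_congr rfl fun i _ => hMrow i
      _ = (∏ i, d i) * ((∏ i, v i (σ i)) * (∏ i, (d (σ i))⁻¹)) := by
          rw [Finset.prod_mul_distrib, Finset.prod_mul_distrib]
      _ = (∏ i, d i) * ((∏ i, v i (σ i)) * (∏ i, (d i)⁻¹)) := by
          rw [Function.Bijective.prod_comp hσbij (fun j => (d j)⁻¹)]
      _ = ((∏ i, d i) * (∏ i, (d i)⁻¹)) * (∏ i, v i (σ i)) := by ring
      _ = 1 := by
          rw [← Finset.prod_mul_distrib]
          have h1 : (∏ i, d i * (d i)⁻¹) = 1 := by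
            apply Finset.prod_eq_one
            intro i _
            exact mul_inv_cancel₀ (hd0 i)
          rw [h1, one_mul]
          rw [show (∏ i, v i (σ i)) = ∏ i, ∑ j, v i j from
            (Finset.prod_congr rfl fun i _ => (hrow1 i).symm)]
          exact hv4

lemma geen_unitary {e n : ℕ} (he : 0 < e) {w : Matrix (Fin n) (Fin n) ℂ}
    (hw : IsGeen e n w) : w * w.conjTranspose = 1 ∧ w.conjTranspose * w = 1 := by
  obtain ⟨hw1, hw2, hw3, _⟩ := hw
  have habs : ∀ i j, w i j ≠ 0 → w i j * star (w i j) = 1 := by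
    intro i j h
    have hpow := hw3 i j h
    have habs1 : ‖w i j‖ = 1 := by
      have hpe : ‖w i j‖ ^ e = 1 := by
        rw [← norm_pow, hpow]; exact norm_one
      have h0 : (0:ℝ) ≤ ‖w i j‖ := norm_nonneg _
      rcases lt_trichotomy (‖w i j‖) 1 with hlt | heq | hgt
      · exact absurd hpe (by
          have := pow_lt_one₀ h0 hlt he.ne'
          linarith)
      · exact heq
      · exact absurd hpe (by
          have := one_lt_pow₀ hgt he.ne'
          linarith)
    have : w i j * star (w i j) = (‖w i j‖ : ℂ) ^ 2 := by
      rw [show (star (w i j)) = (starRingEnd ℂ) (w i j) from rfl, Complex.mul_conj,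
        ← Complex.sq_norm]
      norm_cast
    rw [this, habs1]
    norm_num
  constructor
  · ext i k
    rw [Matrix.mul_apply]
    by_cases hik : i = k
    · subst hik
      choose σ hσ hσu using hw1
      rw [Matrix.one_apply_eq]
      calc (∑ j, w i j * w.conjTranspose j i) = ∑ j, w i j * star (w i j) := by
            apply Finset.sum_congr rfl; intro j _; rw [Matrix.conjTranspose_apply]
        _ = 1 := by
            rw [Finset.sum_eq_single (σ i)]
            · exact habs i (σ i) (hσ i)
            · intro b _ hb
              have hb0 : w i b = 0 := by by_contra hc; exact hb (hσu i b hc)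
              rw [hb0, zero_mul]
            · intro h; exact absurd (Finset.mem_univ _) h
    · rw [Matrix.one_apply_ne hik]
      apply Finset.sum_eq_zero
      intro j _
      rw [Matrix.conjTranspose_apply]
      by_cases h1 : w i j = 0
      · rw [h1, zero_mul]
      · have h2 : w k j = 0 := by
          by_contra hc
          obtain ⟨i2, _, hu2⟩ := hw2 j
          exact hik ((hu2 i h1).trans (hu2 k hc).symm)
        rw [h2, star_zero, mul_zero]
  · ext i k
    rw [Matrix.mul_apply]
    by_cases hik : i = k
    · subst hik
      choose τ hτ hτu using hw2
      rw [Matrix.one_apply_eq]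
      calc (∑ j, w.conjTranspose i j * w j i) = ∑ j, star (w j i) * w j i := by
            apply Finset.sum_congr rfl; intro j _; rw [Matrix.conjTranspose_apply]
        _ = 1 := by
            rw [Finset.sum_eq_single (τ i)]
            · rw [mul_comm]; exact habs (τ i) i (hτ i)
            · intro b _ hb
              have hb0 : w b i = 0 := by by_contra hc; exact hb (hτu i b hc)
              rw [hb0, mul_zero]
            · intro h; exact absurd (Finset.mem_univ _) h
    · rw [Matrix.one_apply_ne hik]
      apply Finset.sum_eq_zero
      intro j _
      rw [Matrix.conjTranspose_apply]
      by_cases h1 : w j i = 0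
      · rw [h1, star_zero, zero_mul]
      · have h2 : w j k = 0 := by
          by_contra hc
          obtain ⟨j2, _, hu2⟩ := hw1 j
          exact hik ((hu2 i h1).trans (hu2 k hc).symm)
        rw [h2, mul_zero]

lemma lam_pow_diag (e n k : ℕ) :
    lamMat e n ^ k = Matrix.diagonal (fun i => dvec e n i ^ k) := by
  rw [lamMat_eq, Matrix.diagonal_pow]
  rfl

lemma lamInv_pow_diag (e n k : ℕ) :
    lamInv e n ^ k = Matrix.diagonal (fun i => (dvec e n i ^ k)⁻¹) := by
  rw [lamInv, Matrix.diagonal_pow,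
    show ((fun p => (dvec e n p)⁻¹) ^ k) = fun i => (dvec e n i ^ k)⁻¹ from
      funext fun i => by rw [Pi.pow_apply, inv_pow]]

/-- For `1 ≤ k ≤ e-1`, the element `λ^k ∈ G(e,e,n)` is
balanced: left divisors and right divisors of `λ^k` coincide. -/
theorem statement8 (e n k : ℕ) (he : 1 < e) (hn : 2 ≤ n)
    (hk1 : 1 ≤ k) (hk : k ≤ e - 1)
    (w : Matrix (Fin n) (Fin n) ℂ) (hw : IsGeen e n w) :
    LDiv e n w (lamMat e n ^ k) ↔ RDiv e n w (lamMat e n ^ k) := by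
  have he0 : 0 < e := lt_trans zero_lt_one he
  have hwU := geen_unitary he0 hw
  have hd0 : ∀ i : Fin n, dvec e n i ^ k ≠ 0 := fun i => pow_ne_zero _ (dvec_ne_zero e n i)
  have hde : ∀ i : Fin n, (dvec e n i ^ k) ^ e = 1 := by
    intro i
    rw [← pow_mul, mul_comm, pow_mul, dvec_pow_e n he0, one_pow]
  constructor
  · rintro ⟨v, hv, hmul, hlen⟩
    have hvU := geen_unitary he0 hv
    have h1 : lamMat e n ^ k * (v.conjTranspose * w.conjTranspose) = 1 := by
      rw [← hmul]
      have : w * v * (v.conjTranspose * w.conjTranspose)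
          = w * (v * v.conjTranspose) * w.conjTranspose := by
        simp only [Matrix.mul_assoc]
      rw [this, hvU.1, Matrix.mul_one, hwU.1]
    have hDinv : lamInv e n ^ k = v.conjTranspose * w.conjTranspose := by
      calc lamInv e n ^ k = lamInv e n ^ k * (lamMat e n ^ k * (v.conjTranspose * w.conjTranspose)) := by
            rw [h1, Matrix.mul_one]
        _ = (lamInv e n ^ k * lamMat e n ^ k) * (v.conjTranspose * w.conjTranspose) := by
            rw [Matrix.mul_assoc]
        _ = v.conjTranspose * w.conjTranspose := by
            rw [inv_pow_mul_lam_pow, Matrix.one_mul]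
    refine ⟨lamMat e n ^ k * v * lamInv e n ^ k, ?_, ?_, ?_⟩
    · rw [lam_pow_diag, lamInv_pow_diag]
      exact geen_diag_conj he0 _ hd0 hde hv
    · rw [hDinv]
      have : lamMat e n ^ k * v * (v.conjTranspose * w.conjTranspose) * w
          = lamMat e n ^ k * (v * v.conjTranspose) * (w.conjTranspose * w) := by
        simp only [Matrix.mul_assoc]
      rw [this, hvU.1, hwU.2, Matrix.mul_one, Matrix.mul_one]
    · rw [len_conj_pow he0 hn k v, add_comm]
      exact hlen
  · rintro ⟨v, hv, hmul, hlen⟩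
    have hvU := geen_unitary he0 hv
    have h1 : lamMat e n ^ k * (w.conjTranspose * v.conjTranspose) = 1 := by
      rw [← hmul]
      have : v * w * (w.conjTranspose * v.conjTranspose)
          = v * (w * w.conjTranspose) * v.conjTranspose := by
        simp only [Matrix.mul_assoc]
      rw [this, hwU.1, Matrix.mul_one, hvU.1]
    have hDinv : lamInv e n ^ k = w.conjTranspose * v.conjTranspose := by
      calc lamInv e n ^ k = lamInv e n ^ k * (lamMat e n ^ k * (w.conjTranspose * v.conjTranspose)) := by
            rw [h1, Matrix.mul_one]
        _ = (lamInv e n ^ k * lamMat e n ^ k) * (w.conjTranspose * v.conjTranspose) := by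
            rw [Matrix.mul_assoc]
        _ = w.conjTranspose * v.conjTranspose := by
            rw [inv_pow_mul_lam_pow, Matrix.one_mul]
    refine ⟨lamInv e n ^ k * v * lamMat e n ^ k, ?_, ?_, ?_⟩
    · have hrw : lamInv e n ^ k * v * lamMat e n ^ k
          = Matrix.diagonal (fun i => (dvec e n i ^ k)⁻¹) * v *
            Matrix.diagonal (fun i => ((dvec e n i ^ k)⁻¹)⁻¹) := by
        rw [lam_pow_diag, lamInv_pow_diag,
          show (fun i => ((dvec e n i ^ k)⁻¹)⁻¹) = fun i => dvec e n i ^ k from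
            funext fun i => inv_inv _]
      rw [hrw]
      exact geen_diag_conj he0 _ (fun i => inv_ne_zero (hd0 i))
        (fun i => by rw [inv_pow, hde i, inv_one]) hv
    · rw [hDinv]
      have h2 : w * (w.conjTranspose * v.conjTranspose * v * lamMat e n ^ k)
          = w * w.conjTranspose * (v.conjTranspose * v) * lamMat e n ^ k := by
        simp only [Matrix.mul_assoc]
      rw [h2, hwU.1, hvU.2, Matrix.one_mul, Matrix.one_mul]
    · rw [len_conj_pow' he0 hn k v, add_comm]
      exact hlen
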